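/- For all nonnegative integers m and n, the sum over k from 0 to floor(n/2) of [m+k choose k]_{q^2} * [m+1 choose n-2k]_q * q^{C(n-2k, 2)} equals [m+n choose n]_q, as an identity of polynomials (or rational functions) in q. -/

import Mathlib

open Finset

/-- The Gaussian (q-)binomial coefficient `[a choose b]_q`, defined as
`∏_{i=1}^{b} (1 - q^(a-i+1)) / (1 - q^i)` (which is `0` when `b > a`). -/
noncomputable def qbinom (q : RatFunc ℚ) (a b : ℕ) : RatFunc ℚ :=
  ∏ i ∈ Finset.range b, (1 - q ^ ((a : ℤ) - i)) / (1 - q ^ ((i : ℤ) + 1))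

/-!
Since `∑ₖ [m+k choose k]_{q²} x^{2k} = ∏_{i ≤ m} (1 - q^{2i} x²)⁻¹` and
`∑ⱼ [m+1 choose j]_q q^{C(j,2)} xʲ = ∏_{i ≤ m} (1 + q^i x)`, the left side is the coefficient of
`xⁿ` in `∏_{i ≤ m} (1 - q^i x)⁻¹`, which is `[m+n choose n]_q`. Instead of manipulating power
series we compare coefficients: the left side `S m n` satisfies the q-Pascal recurrence
`S (m+1) (n+1) = S (m+1) n + q^{n+1} S m (n+1)` of `[m+n choose n]_q`, by the Pascal recurrences
of the coefficients of the two products and a summation by parts, and both sides are `1` when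
`m = 0` or `n = 0`.
-/

open RatFunc

section qbinom

variable (q : RatFunc ℚ)

@[simp]
theorem qbinom_zero_right (a : ℕ) : qbinom q a 0 = 1 :=
  prod_range_zero _

theorem qbinom_of_lt {a b : ℕ} (h : a < b) : qbinom q a b = 0 :=
  prod_eq_zero (mem_range.2 h) (by simp)

theorem qbinom_succ_right (a b : ℕ) :
    qbinom q a (b + 1) = (1 - q ^ ((a : ℤ) - b)) / (1 - q ^ ((b : ℤ) + 1)) * qbinom q a b := by
  rw [qbinom, prod_range_succ, mul_comm]
  rfl

theorem qbinom_succ_succ (a b : ℕ) :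
    qbinom q (a + 1) (b + 1) =
      (1 - q ^ ((a : ℤ) + 1)) / (1 - q ^ ((b : ℤ) + 1)) * qbinom q a b := by
  rw [qbinom, qbinom, prod_div_distrib, prod_div_distrib, prod_range_succ', prod_range_succ]
  push_cast
  simp only [add_sub_add_right_eq_sub, sub_zero, div_eq_mul_inv, mul_inv]
  ring

theorem qbinom_self (hq : ∀ i : ℕ, 1 - q ^ ((i : ℤ) + 1) ≠ 0) (n : ℕ) : qbinom q n n = 1 := by
  induction n with
  | zero => exact qbinom_zero_right q 0
  | succ n ih => rw [qbinom_succ_succ, ih, mul_one, div_self (hq n)]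

theorem qbinom_succ_succ_eq_add (hq : q ≠ 0) (a b : ℕ) (hb : 1 - q ^ ((b : ℤ) + 1) ≠ 0) :
    qbinom q (a + 1) (b + 1) = qbinom q a b + q ^ (b + 1) * qbinom q a (b + 1) := by
  have hpow : q ^ (b + 1) * q ^ ((a : ℤ) - b) = q ^ ((a : ℤ) + 1) := by
    rw [← zpow_natCast, ← zpow_add₀ hq]
    push_cast
    ring_nf
  have hzpow : q ^ ((b : ℤ) + 1) = q ^ (b + 1) := by exact_mod_cast zpow_natCast q (b + 1)
  rw [qbinom_succ_succ, qbinom_succ_right, ← hpow, hzpow]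
  rw [hzpow] at hb
  field_simp
  ring

end qbinom

section X

variable {K : Type*} [Field K]

theorem RatFunc.X_pow_ne_one {n : ℕ} (hn : n ≠ 0) : (X : RatFunc K) ^ n ≠ 1 :=
  fun h => (transcendental_X.pow (Nat.pos_of_ne_zero hn)) (h ▸ isAlgebraic_one)

theorem one_sub_X_pow_zpow_succ_ne_zero {d : ℕ} (hd : d ≠ 0) (i : ℕ) :
    (1 : RatFunc K) - (X ^ d) ^ ((i : ℤ) + 1) ≠ 0 := by
  rw [sub_ne_zero, ne_comm, ← Nat.cast_succ, zpow_natCast, ← pow_mul]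
  exact X_pow_ne_one (mul_ne_zero hd i.succ_ne_zero)

theorem one_sub_X_zpow_succ_ne_zero (i : ℕ) : (1 : RatFunc K) - X ^ ((i : ℤ) + 1) ≠ 0 := by
  simpa using one_sub_X_pow_zpow_succ_ne_zero one_ne_zero i

end X

namespace QSunIdentity

/-- Both coefficient families are extended by zero to negative indices, so that the index shifts
of the summation by parts need no side conditions. -/
noncomputable def sqCoeff (m : ℕ) : ℤ → RatFunc ℚ
  | (k : ℕ) => qbinom (X ^ 2) (m + k) k
  | Int.negSucc _ => 0

noncomputable def rotheCoeff (m : ℕ) : ℤ → RatFunc ℚ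
  | (j : ℕ) => qbinom X (m + 1) j * X ^ j.choose 2
  | Int.negSucc _ => 0

@[simp]
theorem sqCoeff_natCast (m k : ℕ) : sqCoeff m k = qbinom (X ^ 2) (m + k) k := rfl

@[simp]
theorem rotheCoeff_natCast (m j : ℕ) : rotheCoeff m j = qbinom X (m + 1) j * X ^ j.choose 2 := rfl

theorem sqCoeff_of_neg (m : ℕ) {k : ℤ} (hk : k < 0) : sqCoeff m k = 0 := by
  obtain ⟨k, rfl⟩ := Int.eq_negSucc_of_lt_zero hk
  rfl

theorem rotheCoeff_of_neg (m : ℕ) {j : ℤ} (hj : j < 0) : rotheCoeff m j = 0 := by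
  obtain ⟨j, rfl⟩ := Int.eq_negSucc_of_lt_zero hj
  rfl

theorem sqCoeff_succ_natCast (m k : ℕ) :
    sqCoeff (m + 1) k = sqCoeff (m + 1) ((k : ℤ) - 1) + X ^ (2 * k) * sqCoeff m k := by
  cases k with
  | zero =>
    rw [sqCoeff_natCast, sqCoeff_natCast, Nat.cast_zero, zero_sub, sqCoeff_of_neg _ (by norm_num)]
    simp
  | succ k =>
    rw [show ((k + 1 : ℕ) : ℤ) - 1 = k by push_cast; ring, sqCoeff_natCast, sqCoeff_natCast,
      sqCoeff_natCast, show m + 1 + (k + 1) = m + 1 + k + 1 by ring,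
      show m + (k + 1) = m + 1 + k by ring, pow_mul]
    exact qbinom_succ_succ_eq_add (X ^ 2) (pow_ne_zero 2 X_ne_zero) (m + 1 + k) k
      (one_sub_X_pow_zpow_succ_ne_zero two_ne_zero k)

theorem rotheCoeff_succ (m : ℕ) (j : ℤ) :
    rotheCoeff (m + 1) j = X ^ (j - 1) * rotheCoeff m (j - 1) + X ^ j * rotheCoeff m j := by
  rcases lt_or_ge j 0 with hj | hj
  · simp [rotheCoeff_of_neg, hj, sub_neg.2 (hj.trans zero_lt_one)]
  lift j to ℕ using hj
  cases j with
  | zero =>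
    rw [rotheCoeff_natCast, rotheCoeff_natCast, Nat.cast_zero, zero_sub,
      rotheCoeff_of_neg m (j := -1) (by norm_num)]
    simp
  | succ j =>
    rw [show ((j + 1 : ℕ) : ℤ) - 1 = j by push_cast; ring, rotheCoeff_natCast, rotheCoeff_natCast,
      rotheCoeff_natCast, zpow_natCast, zpow_natCast,
      qbinom_succ_succ_eq_add X X_ne_zero (m + 1) j (one_sub_X_zpow_succ_ne_zero j),
      Nat.choose_succ_succ', Nat.choose_one_right]
    ring

theorem rotheCoeff_succ_sub (m : ℕ) (j : ℤ) :
    rotheCoeff (m + 1) j - rotheCoeff (m + 1) (j - 1) =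
      X ^ j * rotheCoeff m j - X ^ (j - 2) * rotheCoeff m (j - 2) := by
  rw [rotheCoeff_succ, rotheCoeff_succ m (j - 1), show j - 1 - 1 = j - 2 by ring]
  ring

theorem rotheCoeff_zero_left (j : ℕ) : rotheCoeff 0 j = if j ≤ 1 then 1 else 0 := by
  rw [rotheCoeff_natCast]
  match j with
  | 0 => simp
  | 1 => simpa using qbinom_self X one_sub_X_zpow_succ_ne_zero 1
  | j + 2 => simp [qbinom_of_lt]

noncomputable def sunSum (m n : ℕ) : RatFunc ℚ :=
  ∑ k ∈ range (n / 2 + 1), sqCoeff m k * rotheCoeff m ((n : ℤ) - 2 * k)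

theorem sunSum_eq_sum_range {m n N : ℕ} (hN : n / 2 < N) :
    sunSum m n = ∑ k ∈ range N, sqCoeff m k * rotheCoeff m ((n : ℤ) - 2 * k) := by
  refine sum_subset (range_subset_range.2 hN) fun k _ hk => ?_
  rw [rotheCoeff_of_neg m (by simp at hk; omega), mul_zero]

theorem sunSum_zero_right (m : ℕ) : sunSum m 0 = 1 := by
  rw [sunSum, sum_range_one, Nat.cast_zero, mul_zero, sub_zero, ← Nat.cast_zero, sqCoeff_natCast,
    rotheCoeff_natCast]
  simp

theorem sunSum_zero_left (n : ℕ) : sunSum 0 n = 1 := by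
  rw [sunSum, sum_eq_single_of_mem (n / 2) (self_mem_range_succ _)]
  · rw [show (n : ℤ) - 2 * (n / 2 : ℕ) = (n % 2 : ℕ) by omega, sqCoeff_natCast, zero_add,
      qbinom_self _ (one_sub_X_pow_zpow_succ_ne_zero two_ne_zero), rotheCoeff_zero_left,
      if_pos (by omega), one_mul]
  · intro k hk hkn
    rw [show (n : ℤ) - 2 * k = (n - 2 * k : ℕ) by simp at hk; omega, rotheCoeff_zero_left,
      if_neg (by simp at hk; omega), mul_zero]

theorem sunSum_succ_succ (m n : ℕ) :
    sunSum (m + 1) (n + 1) = sunSum (m + 1) n + X ^ (n + 1) * sunSum m (n + 1) := by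
  set f : ℕ → RatFunc ℚ := fun k => X ^ ((n + 1 : ℤ) - 2 * k) * rotheCoeff m ((n + 1 : ℤ) - 2 * k)
    with hf
  set F : ℕ → RatFunc ℚ := fun k => sqCoeff (m + 1) ((k : ℤ) - 1) * f k with hF
  have hF0 : F 0 = 0 := by simp [hF, sqCoeff_of_neg]
  have hFN : F (n + 2) = 0 := by
    simp only [hF, hf]
    rw [rotheCoeff_of_neg m (by push_cast; omega), mul_zero, mul_zero]
  have hcast (k : ℕ) : ((n + 1 : ℕ) : ℤ) - 2 * k = (n + 1 : ℤ) - 2 * k := by push_cast; ring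
  rw [← sub_eq_iff_eq_add']
  calc sunSum (m + 1) (n + 1) - sunSum (m + 1) n
      = ∑ k ∈ range (n + 2), sqCoeff (m + 1) k * (f k - f (k + 1)) := by
        rw [sunSum_eq_sum_range (N := n + 2) (by omega),
          sunSum_eq_sum_range (N := n + 2) (by omega), ← sum_sub_distrib]
        refine sum_congr rfl fun k _ => ?_
        rw [← mul_sub, hcast, show (n : ℤ) - 2 * k = (n + 1 : ℤ) - 2 * k - 1 by ring,
          rotheCoeff_succ_sub]
        simp only [hf, Nat.cast_succ, show (n + 1 : ℤ) - 2 * (k + 1) = (n + 1 : ℤ) - 2 * k - 2 by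
          ring]
    -- summation by parts; the boundary terms `F 0` and `F (n + 2)` vanish
    _ = ∑ k ∈ range (n + 2), (sqCoeff (m + 1) k - sqCoeff (m + 1) ((k : ℤ) - 1)) * f k -
          ∑ k ∈ range (n + 2), (F (k + 1) - F k) := by
        rw [← sum_sub_distrib]
        refine sum_congr rfl fun k _ => ?_
        simp only [hF, Nat.cast_succ, add_sub_cancel_right]
        ring
    _ = X ^ (n + 1) * sunSum m (n + 1) := by
        rw [sum_range_sub, hF0, hFN, sub_zero, sub_zero,
          sunSum_eq_sum_range (N := n + 2) (by omega), mul_sum]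
        refine sum_congr rfl fun k _ => ?_
        have hX : (X : RatFunc ℚ) ^ (2 * k) * X ^ ((n + 1 : ℤ) - 2 * k) = X ^ (n + 1) := by
          rw [← zpow_natCast, ← zpow_add₀ X_ne_zero, ← zpow_natCast]
          push_cast
          ring_nf
        rw [sqCoeff_succ_natCast, add_sub_cancel_left, hf, hcast]
        linear_combination (sqCoeff m k * rotheCoeff m ((n + 1 : ℤ) - 2 * k)) * hX

theorem sunSum_eq_qbinom (m n : ℕ) : sunSum m n = qbinom X (m + n) n := by
  induction m generalizing n with
  | zero => rw [sunSum_zero_left, zero_add, qbinom_self X one_sub_X_zpow_succ_ne_zero]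
  | succ m ihm =>
    induction n with
    | zero => rw [sunSum_zero_right, qbinom_zero_right]
    | succ n ihn =>
      rw [sunSum_succ_succ, ihn, ihm, show m + 1 + (n + 1) = m + n + 1 + 1 by ring,
        show m + 1 + n = m + n + 1 by ring, show m + (n + 1) = m + n + 1 by ring]
      exact (qbinom_succ_succ_eq_add X X_ne_zero (m + n + 1) n (one_sub_X_zpow_succ_ne_zero n)).symm

end QSunIdentity

open QSunIdentity in
theorem q_sun_identity_new3 (m n : ℕ) :
    ∑ k ∈ range (n / 2 + 1),
      qbinom (RatFunc.X ^ 2) (m + k) k * qbinom RatFunc.X (m + 1) (n - 2 * k) *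
        RatFunc.X ^ ((n - 2 * k).choose 2) =
    qbinom RatFunc.X (m + n) n := by
  rw [← sunSum_eq_qbinom, sunSum]
  refine sum_congr rfl fun k hk => ?_
  rw [show (n : ℤ) - 2 * k = (n - 2 * k : ℕ) by simp at hk; omega, sqCoeff_natCast,
    rotheCoeff_natCast, mul_assoc]
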